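/- Let o be a noetherian commutative ring, F a nonarchimedean local field, B the upper triangular subgroup of GL(2,F), and let V be a smooth representation of B over o. Let V_0 be an o[B_0 Z]-submodule of V generating V as o[B]-module, and suppose the kernel R_V(V_0) of the associated presentation ind_{B_0 Z}^B(V_0) -> V is finitely generated as o[B]-module. Then Delta_V(V_0) := <B^+ V_0> ∩ <(B - B^+) V_0> is finitely generated as an o[B_0 Z]-module. -/

import Mathlib

noncomputable section
attribute [local instance] Classical.propDecidable
open Pointwise


/-! ### Generalities on smooth representations over a commutative ring `o` -/

section RepPrelim

variable (o : Type) [CommRing o]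

/-- The `o`-submodule of `V` generated by `{s • w | s ∈ S, w ∈ W}`; written `<S W>` in the paper. -/
def gspan {H : Type} (V : Type) [AddCommGroup V] [Module o V] [SMul H V]
    (S : Set H) (W : Set V) : Submodule o V :=
  Submodule.span o {v : V | ∃ s ∈ S, ∃ w ∈ W, v = s • w}

/-- A submodule `N` is stable under the set `S` of group elements. -/
def IsStableSub {H : Type} (V : Type) [AddCommGroup V] [Module o V] [SMul H V]
    (S : Set H) (N : Submodule o V) : Prop :=
  ∀ s ∈ S, ∀ v ∈ N, s • v ∈ N

/-- `N` is a finitely generated module over `o[S]`. -/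
def IsFGOver {H : Type} (V : Type) [AddCommGroup V] [Module o V] [SMul H V]
    (S : Set H) (N : Submodule o V) : Prop :=
  ∃ X : Finset V, (X : Set V) ⊆ (N : Set V) ∧ N = gspan o V S (X : Set V)

/-- The submodule of `S`-invariants. -/
def invariantsSub (H : Type) [Group H] (V : Type) [AddCommGroup V] [Module o V]
    [DistribMulAction H V] [SMulCommClass H o V] (S : Set H) : Submodule o V where
  carrier := {v | ∀ s ∈ S, s • v = v}
  add_mem' := by intro a b ha hb s hs; rw [smul_add, ha s hs, hb s hs]
  zero_mem' := by intro s hs; exact smul_zero s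
  smul_mem' := by intro c v hv s hs; rw [smul_comm, hv s hs]

/-- The action of a fixed group element as an `o`-linear map. -/
def actLin (H : Type) [Group H] (V : Type) [AddCommGroup V] [Module o V]
    [DistribMulAction H V] [SMulCommClass H o V] (g : H) : V →ₗ[o] V where
  toFun v := g • v
  map_add' := smul_add g
  map_smul' c v := by simpa using smul_comm g c v

/-- `V` has finite length as an `o[H]`-module: it admits a composition series of
`H`-stable `o`-submodules. -/
def IsFiniteLengthRep (H : Type) [Group H] (V : Type) [AddCommGroup V] [Module o V]
    [DistribMulAction H V] : Prop :=
  ∃ (n : ℕ) (c : Fin (n + 1) → Submodule o V),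
    c 0 = ⊥ ∧ c (Fin.last n) = ⊤ ∧
    (∀ i, IsStableSub o V (Set.univ : Set H) (c i)) ∧
    (∀ i : Fin n, c i.castSucc < c i.succ) ∧
    (∀ i : Fin n, ∀ N : Submodule o V, IsStableSub o V (Set.univ : Set H) N →
      c i.castSucc ≤ N → N ≤ c i.succ → N = c i.castSucc ∨ N = c i.succ)

/-- Smoothness: each vector has open stabilizer. -/
def IsSmoothRep (H : Type) [Group H] [TopologicalSpace H] (V : Type) [AddCommGroup V]
    [Module o V] [DistribMulAction H V] : Prop :=
  ∀ v : V, IsOpen {h : H | h • v = v}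

/-- Admissibility: invariants under any compact open subgroup form a f.g. `o`-module. -/
def IsAdmissibleRep (H : Type) [Group H] [TopologicalSpace H] (V : Type) [AddCommGroup V]
    [Module o V] [DistribMulAction H V] [SMulCommClass H o V] : Prop :=
  ∀ H' : Subgroup H, IsCompact (H' : Set H) → IsOpen (H' : Set H) →
    (invariantsSub o H V (H' : Set H)).FG

end RepPrelim

/-! ### Compact induction `ind_{S}^{H}(V₀)` and finite presentations -/

section Induction

variable (o : Type) [CommRing o]
variable {H : Type} [Group H] {V : Type} [AddCommGroup V] [Module o V]
variable [DistribMulAction H V] [SMulCommClass H o V]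

/-- The compact induction `ind_S^H (V₀)`, realized as the `o`-module of functions
`f : H → V` with values in `V₀`, satisfying `f (s * h) = s • f h` for `s ∈ S`, and
supported on finitely many right cosets `S * x`. -/
def Ind (S : Subgroup H) (V0 : Submodule o V) : Submodule o (H → V) where
  carrier := {f | (∀ h, f h ∈ V0) ∧ (∀ s ∈ S, ∀ h, f (s * h) = s • f h) ∧
      ∃ X : Finset H, ∀ h, f h ≠ 0 → ∃ s ∈ S, ∃ x ∈ X, h = s * x}
  add_mem' := by
    rintro f g ⟨hf1, hf2, Xf, hXf⟩ ⟨hg1, hg2, Xg, hXg⟩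
    refine ⟨fun h => V0.add_mem (hf1 h) (hg1 h),
      fun s hs h => by simp only [Pi.add_apply, hf2 s hs h, hg2 s hs h, smul_add],
      Xf ∪ Xg, fun h hh => ?_⟩
    by_cases hf : f h = 0
    · have hg : g h ≠ 0 := fun h0 => hh (by simp [Pi.add_apply, hf, h0])
      obtain ⟨s, hs, x, hx, hxx⟩ := hXg h hg
      exact ⟨s, hs, x, Finset.mem_union_right _ hx, hxx⟩
    · obtain ⟨s, hs, x, hx, hxx⟩ := hXf h hf
      exact ⟨s, hs, x, Finset.mem_union_left _ hx, hxx⟩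
  zero_mem' :=
    ⟨fun _ => V0.zero_mem, fun s _ _ => (smul_zero s).symm, ∅, fun h hh => absurd rfl hh⟩
  smul_mem' := by
    rintro c f ⟨hf1, hf2, Xf, hXf⟩
    refine ⟨fun h => V0.smul_mem c (hf1 h),
      fun s hs h => by
        simp only [Pi.smul_apply, hf2 s hs h]
        exact (smul_comm s c (f h)).symm,
      Xf, fun h hh => hXf h (fun h0 => hh (by simp [Pi.smul_apply, h0]))⟩

variable {S : Subgroup H} {V0 : Submodule o V}

/-- Right translation, giving the `H`-action on the compact induction. -/
def indTrans (g : H) (f : H → V) : H → V := fun h => f (h * g)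

lemma indTrans_mem (g : H) {f : H → V} (hf : f ∈ Ind o S V0) : indTrans g f ∈ Ind o S V0 := by
  obtain ⟨h1, h2, X, hX⟩ := hf
  refine ⟨fun h => h1 _, fun s hs h => by
      simpa [indTrans, mul_assoc] using h2 s hs (h * g),
    X.image (· * g⁻¹), fun h hh => ?_⟩
  obtain ⟨s, hs, x, hx, hxx⟩ := hX (h * g) hh
  refine ⟨s, hs, x * g⁻¹, Finset.mem_image_of_mem _ hx, ?_⟩
  rw [← mul_assoc, ← hxx, mul_assoc, mul_inv_cancel, mul_one]

instance : SMul H (Ind o S V0) :=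
  ⟨fun g f => ⟨indTrans g (f : H → V), indTrans_mem o g f.2⟩⟩

lemma ind_smul_apply (g : H) (f : Ind o S V0) (h : H) :
    ((g • f : Ind o S V0) : H → V) h = (f : H → V) (h * g) := rfl

instance : MulAction H (Ind o S V0) where
  one_smul f := Subtype.ext (funext fun h => by simp [ind_smul_apply])
  mul_smul g1 g2 f := Subtype.ext (funext fun h => by simp [ind_smul_apply, mul_assoc])

instance : DistribMulAction H (Ind o S V0) where
  smul_add g f1 f2 := Subtype.ext (funext fun h => rfl)
  smul_zero g := Subtype.ext (funext fun h => rfl)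

instance : SMulCommClass H o (Ind o S V0) :=
  ⟨fun g c f => Subtype.ext (funext fun h => rfl)⟩

/-- The function `[1, v]` supported on `S`, with value `v` at `1`. -/
def unitFn (S : Subgroup H) (v : V) : H → V := fun h => if h ∈ S then h • v else 0

lemma unitFn_mem (hst : IsStableSub o V (S : Set H) V0) {v : V} (hv : v ∈ V0) :
    unitFn S v ∈ Ind o S V0 := by
  refine ⟨fun h => ?_, fun s hs h => ?_, {1}, fun h hh => ?_⟩
  · by_cases h1 : h ∈ S
    · simpa [unitFn, h1] using hst h h1 v hv
    · simp [unitFn, h1, V0.zero_mem]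
  · by_cases h1 : h ∈ S
    · have hsh : s * h ∈ S := S.mul_mem hs h1
      simp [unitFn, h1, hsh, mul_smul]
    · have hsh : s * h ∉ S := fun hc => h1 (by simpa using S.mul_mem (S.inv_mem hs) hc)
      simp [unitFn, h1, hsh]
  · by_cases h1 : h ∈ S
    · exact ⟨h, h1, 1, Finset.mem_singleton_self 1, (mul_one h).symm⟩
    · simp [unitFn, h1] at hh

/-- The element `[1, v]` of the compact induction. -/
def unitElt (hst : IsStableSub o V (S : Set H) V0) {v : V} (hv : v ∈ V0) : Ind o S V0 :=
  ⟨unitFn S v, unitFn_mem o hst hv⟩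

/-- `P` is the natural presentation map `ind_S^H (V₀) → V`: it is `H`-equivariant and sends
`[1, v]` to `v`. -/
def IsPresMap (hst : IsStableSub o V (S : Set H) V0) (P : Ind o S V0 →ₗ[o] V) : Prop :=
  (∀ (g : H) (f : Ind o S V0), P (g • f) = g • P f) ∧
  (∀ v (hv : v ∈ V0), P (unitElt o hst hv) = v)

end Induction

/-- `V₀ ⊆ V` yields a finite presentation `ind_S^H (V₀) → V`: `V₀` is an `S`-stable
`o`-submodule, finitely generated over `o[S]`, generating `V` over `o[H]`, and the kernel of
the natural presentation map is finitely generated over `o[H]`. -/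
def FinitelyPresentedVia (o : Type) [CommRing o] {H : Type} [Group H] {V : Type}
    [AddCommGroup V] [Module o V] [DistribMulAction H V] [SMulCommClass H o V]
    (S : Subgroup H) (V0 : Submodule o V) : Prop :=
  ∃ hst : IsStableSub o V (S : Set H) V0,
    IsFGOver o V (S : Set H) V0 ∧ gspan o V (Set.univ : Set H) (V0 : Set V) = ⊤ ∧
    ∃ P : Ind o S V0 →ₗ[o] V, IsPresMap o hst P ∧
      IsFGOver o (Ind o S V0) (Set.univ : Set H) (LinearMap.ker P)

/-- `V` is of finite presentation relative to the open subgroup `S`. -/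
def HasFinitePres (o : Type) [CommRing o] {H : Type} [Group H] (V : Type)
    [AddCommGroup V] [Module o V] [DistribMulAction H V] [SMulCommClass H o V]
    (S : Subgroup H) : Prop :=
  ∃ V0 : Submodule o V, FinitelyPresentedVia o S V0


/-! ### The group `GL(2,F)` over a nonarchimedean local field `F` -/

open Matrix

/-- Bundle of data making the field `F` a nonarchimedean local field: the valuation
ring `O`, a uniformizer `ϖ` generating the maximal ideal, finiteness of the residue
field, compatibility of the topology with the valuation, and local compactness
(equivalently, completeness). -/
structure NALF (F : Type) [Field F] [TopologicalSpace F] [IsTopologicalRing F] where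
  O : Subring F
  isValRing : ∀ x : F, x ≠ 0 → x ∈ O ∨ x⁻¹ ∈ O
  ϖ : F
  ϖ_mem : ϖ ∈ O
  ϖ_ne_zero : ϖ ≠ 0
  ϖ_not_unit : ϖ⁻¹ ∉ O
  ϖ_gen : ∀ x ∈ O, x⁻¹ ∉ O → x / ϖ ∈ O
  residue_finite : Finite (↥O ⧸ Ideal.span {(⟨ϖ, ϖ_mem⟩ : ↥O)})
  nhds_zero : ∀ s : Set F, s ∈ nhds (0 : F) ↔ ∃ n : ℕ, {x : F | ∃ y ∈ O, x = ϖ ^ n * y} ⊆ s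
  locallyCompact : LocallyCompactSpace F

variable (F : Type) [Field F]

lemma GL2.inv_entry_ne (g : GL (Fin 2) F)
    (hg : (g : Matrix (Fin 2) (Fin 2) F) 1 0 = 0) :
    ((g⁻¹ : GL (Fin 2) F) : Matrix (Fin 2) (Fin 2) F) 1 0 = 0 := by
  have hAC : (g : Matrix (Fin 2) (Fin 2) F) * ((g⁻¹ : GL (Fin 2) F) : Matrix (Fin 2) (Fin 2) F)
      = 1 := by
    rw [← Units.val_mul, mul_inv_cancel, Units.val_one]
  have h1 : ((g : Matrix (Fin 2) (Fin 2) F) *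
      ((g⁻¹ : GL (Fin 2) F) : Matrix (Fin 2) (Fin 2) F)) 1 0 = 0 := by
    rw [hAC]; exact Matrix.one_apply_ne (by decide)
  have h2 : ((g : Matrix (Fin 2) (Fin 2) F) *
      ((g⁻¹ : GL (Fin 2) F) : Matrix (Fin 2) (Fin 2) F)) 1 1 = 1 := by
    rw [hAC]; exact Matrix.one_apply_eq 1
  rw [Matrix.mul_apply, Fin.sum_univ_two, hg, zero_mul, zero_add] at h1
  rw [Matrix.mul_apply, Fin.sum_univ_two, hg, zero_mul, zero_add] at h2
  rcases mul_eq_zero.mp h1 with h | h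
  · exact absurd h2 (by rw [h, zero_mul]; exact zero_ne_one)
  · exact h

/-- The upper triangular (Borel) subgroup `B ⊆ GL(2,F)`. -/
def Bgr : Subgroup (GL (Fin 2) F) where
  carrier := {g | (g : Matrix (Fin 2) (Fin 2) F) 1 0 = 0}
  one_mem' := by
    show ((1 : GL (Fin 2) F) : Matrix (Fin 2) (Fin 2) F) 1 0 = 0
    rw [Units.val_one]; exact Matrix.one_apply_ne (by decide)
  mul_mem' := by
    intro a b ha hb
    show ((a * b : GL (Fin 2) F) : Matrix (Fin 2) (Fin 2) F) 1 0 = 0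
    rw [Units.val_mul, Matrix.mul_apply, Fin.sum_univ_two]
    simp only [Set.mem_setOf_eq] at ha hb
    rw [ha, hb, zero_mul, mul_zero, add_zero]
  inv_mem' := by
    intro a ha
    exact GL2.inv_entry_ne F a ha

/-- The maximal compact subgroup `K = GL(2, O_F)` of `GL(2,F)`. -/
def Kgr (O : Subring F) : Subgroup (GL (Fin 2) F) where
  carrier := {g | (∀ i j, (g : Matrix (Fin 2) (Fin 2) F) i j ∈ O) ∧
      (∀ i j, ((g⁻¹ : GL (Fin 2) F) : Matrix (Fin 2) (Fin 2) F) i j ∈ O)}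
  one_mem' := by
    constructor <;>
    · intro i j
      simp only [inv_one, Units.val_one]
      by_cases h : i = j
      · rw [h, Matrix.one_apply_eq]; exact O.one_mem
      · rw [Matrix.one_apply_ne h]; exact O.zero_mem
  mul_mem' := by
    rintro a b ⟨ha1, ha2⟩ ⟨hb1, hb2⟩
    constructor
    · intro i j
      rw [Units.val_mul, Matrix.mul_apply]
      exact Subring.sum_mem O fun k _ => O.mul_mem (ha1 i k) (hb1 k j)
    · intro i j
      rw [_root_.mul_inv_rev, Units.val_mul, Matrix.mul_apply]
      exact Subring.sum_mem O fun k _ => O.mul_mem (hb2 i k) (ha2 k j)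
  inv_mem' := by
    rintro a ⟨ha1, ha2⟩
    refine ⟨ha2, ?_⟩
    rw [inv_inv]
    exact ha1

/-- For a subgroup `A` of a group `G`, the subgroup `A · Z(G)`. -/
def centMul {G : Type} [Group G] (A : Subgroup G) : Subgroup G where
  carrier := {g | ∃ a ∈ A, ∃ z ∈ Subgroup.center G, g = a * z}
  one_mem' := ⟨1, A.one_mem, 1, (Subgroup.center G).one_mem, (one_mul 1).symm⟩
  mul_mem' := by
    rintro x y ⟨a, ha, z, hz, rfl⟩ ⟨a', ha', z', hz', rfl⟩
    refine ⟨a * a', A.mul_mem ha ha', z * z', (Subgroup.center G).mul_mem hz hz', ?_⟩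
    have hcz : a' * z = z * a' := Subgroup.mem_center_iff.mp hz a'
    calc a * z * (a' * z') = a * (z * a' * z') := by
          rw [mul_assoc]; rw [mul_assoc z a' z']
      _ = a * (a' * z * z') := by rw [← hcz]
      _ = a * a' * (z * z') := by rw [mul_assoc a a']; rw [mul_assoc a' z z']
  inv_mem' := by
    rintro x ⟨a, ha, z, hz, rfl⟩
    refine ⟨a⁻¹, A.inv_mem ha, z⁻¹, (Subgroup.center G).inv_mem hz, ?_⟩
    rw [_root_.mul_inv_rev]
    exact (Subgroup.mem_center_iff.mp ((Subgroup.center G).inv_mem hz) a⁻¹).symm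

variable [TopologicalSpace F] [IsTopologicalRing F] (L : NALF F)

/-- The element `t = diag(ϖ, 1)`. -/
def tGL : GL (Fin 2) F :=
  Matrix.GeneralLinearGroup.mkOfDetNeZero !![L.ϖ, 0; 0, 1]
    (by rw [Matrix.det_fin_two_of]; simpa using L.ϖ_ne_zero)

lemma tGL_val : (tGL F L : Matrix (Fin 2) (Fin 2) F) = !![L.ϖ, 0; 0, 1] := rfl

/-- The unipotent element `u(x) = (1 x; 0 1)`. -/
def uGL (x : F) : GL (Fin 2) F :=
  Matrix.GeneralLinearGroup.mkOfDetNeZero !![1, x; 0, 1]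
    (by rw [Matrix.det_fin_two_of]; simp)

lemma uGL_val (x : F) : (uGL F x : Matrix (Fin 2) (Fin 2) F) = !![1, x; 0, 1] := rfl

/-- The element `ω = (0 1; ϖ 0)`. -/
def ωGL : GL (Fin 2) F :=
  Matrix.GeneralLinearGroup.mkOfDetNeZero !![0, 1; L.ϖ, 0]
    (by rw [Matrix.det_fin_two_of]; simpa using L.ϖ_ne_zero)

lemma ωGL_val : (ωGL F L : Matrix (Fin 2) (Fin 2) F) = !![0, 1; L.ϖ, 0] := rfl

/-- `B₀ = B ∩ K`: integral upper triangular matrices with unit diagonal. -/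
def B0gr : Subgroup (GL (Fin 2) F) := Bgr F ⊓ Kgr F L.O

/-- The subgroup `KZ`. -/
def KZgr : Subgroup (GL (Fin 2) F) := centMul (Kgr F L.O)

/-- The subgroup `B₀Z`. -/
def B0Zgr : Subgroup (GL (Fin 2) F) := centMul (B0gr F L)

/-- The monoid `B⁺ = ⋃ₙ B₀ Z tⁿ`, as a subset of `GL(2,F)`. -/
def BplusGL : Set (GL (Fin 2) F) :=
  {g | ∃ b ∈ B0Zgr F L, ∃ n : ℕ, g = b * (tGL F L) ^ n}

lemma tGL_mem_Bgr : tGL F L ∈ Bgr F := by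
  show (tGL F L : Matrix (Fin 2) (Fin 2) F) 1 0 = 0
  rw [tGL_val]
  simp

lemma uGL_mem_Bgr (x : F) : uGL F x ∈ Bgr F := by
  show (uGL F x : Matrix (Fin 2) (Fin 2) F) 1 0 = 0
  rw [uGL_val]
  simp

/-- `t` as an element of `B`. -/
def tB : ↥(Bgr F) := ⟨tGL F L, tGL_mem_Bgr F L⟩

/-- `u(x)` as an element of `B`. -/
def uB (x : F) : ↥(Bgr F) := ⟨uGL F x, uGL_mem_Bgr F x⟩

/-- The monoid `B⁺` as a subset of `B`. -/
def BplusB : Set ↥(Bgr F) := {b | (b : GL (Fin 2) F) ∈ BplusGL F L}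

/-- The subgroup `B₀Z` of `B`. -/
def B0Zb : Subgroup ↥(Bgr F) := (B0Zgr F L).comap (Bgr F).subtype

/-- The subgroup `B ∩ KZ` of `B`. -/
def BcapKZb : Subgroup ↥(Bgr F) := (KZgr F L).comap (Bgr F).subtype

/-- The compact group `U₀ = U(O_F)` of integral upper unipotent matrices, as a subset. -/
def U0set : Set (GL (Fin 2) F) :=
  {g | (g : Matrix (Fin 2) (Fin 2) F) 0 0 = 1 ∧ (g : Matrix (Fin 2) (Fin 2) F) 1 1 = 1 ∧
    (g : Matrix (Fin 2) (Fin 2) F) 1 0 = 0 ∧ (g : Matrix (Fin 2) (Fin 2) F) 0 1 ∈ L.O}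

/-- `U_m = U(p_F^m O_F)`, as a subset of `GL(2,F)`. -/
def UmSet (m : ℕ) : Set (GL (Fin 2) F) :=
  {g | (g : Matrix (Fin 2) (Fin 2) F) 0 0 = 1 ∧ (g : Matrix (Fin 2) (Fin 2) F) 1 1 = 1 ∧
    (g : Matrix (Fin 2) (Fin 2) F) 1 0 = 0 ∧
    ∃ y ∈ L.O, (g : Matrix (Fin 2) (Fin 2) F) 0 1 = L.ϖ ^ m * y}

/-- `U_m⁻ = U⁻(p_F^m O_F)`, the lower unipotent congruence subgroups, as a subset. -/
def UmMinusSet (m : ℕ) : Set (GL (Fin 2) F) :=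
  {g | (g : Matrix (Fin 2) (Fin 2) F) 0 0 = 1 ∧ (g : Matrix (Fin 2) (Fin 2) F) 1 1 = 1 ∧
    (g : Matrix (Fin 2) (Fin 2) F) 0 1 = 0 ∧
    ∃ y ∈ L.O, (g : Matrix (Fin 2) (Fin 2) F) 1 0 = L.ϖ ^ m * y}

/-- `T₀ = T(O_F)`: diagonal matrices with unit entries in `O_F`, as a subset. -/
def T0set : Set (GL (Fin 2) F) :=
  {g | (g : Matrix (Fin 2) (Fin 2) F) 1 0 = 0 ∧ (g : Matrix (Fin 2) (Fin 2) F) 0 1 = 0 ∧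
    (g : Matrix (Fin 2) (Fin 2) F) 0 0 ∈ L.O ∧ ((g : Matrix (Fin 2) (Fin 2) F) 0 0)⁻¹ ∈ L.O ∧
    (g : Matrix (Fin 2) (Fin 2) F) 1 1 ∈ L.O ∧ ((g : Matrix (Fin 2) (Fin 2) F) 1 1)⁻¹ ∈ L.O}

/-- The Iwahori subgroup `I ⊆ K`, as a subset: integral matrices whose reduction is
upper triangular. -/
def Iset : Set (GL (Fin 2) F) :=
  {g | g ∈ Kgr F L.O ∧ ∃ y ∈ L.O, (g : Matrix (Fin 2) (Fin 2) F) 1 0 = L.ϖ * y}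

/-- The pro-`p` Iwahori subgroup `I₁ ⊆ I`, as a subset: integral matrices whose
reduction is upper unipotent. -/
def I1set : Set (GL (Fin 2) F) :=
  {g | g ∈ Kgr F L.O ∧ (∃ y ∈ L.O, (g : Matrix (Fin 2) (Fin 2) F) 1 0 = L.ϖ * y) ∧
    (∃ y ∈ L.O, (g : Matrix (Fin 2) (Fin 2) F) 0 0 - 1 = L.ϖ * y) ∧
    (∃ y ∈ L.O, (g : Matrix (Fin 2) (Fin 2) F) 1 1 - 1 = L.ϖ * y)}

/-- The set `IZ`. -/
def IZset : Set (GL (Fin 2) F) :=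
  {g | ∃ i ∈ Iset F L, ∃ z ∈ Subgroup.center (GL (Fin 2) F), g = i * z}

/-- The set `ωIZ`. -/
def ωIZset : Set (GL (Fin 2) F) := {g | ∃ h ∈ IZset F L, g = ωGL F L * h}


/-!
Call the coset `B₀Z h` of `ind_{B₀Z}^B V₀` positive when `h⁻¹ ∈ B⁺`. As `B⁺` is stable under `B₀Z`
on both sides, restricting functions to the positive cosets is a `B₀Z`-equivariant projection `pr`,
and `P ∘ pr`, `P ∘ (1 - pr)` take values in `<B⁺V₀>` and `<(B - B⁺)V₀>`. Hence
`Δ_V(V₀) = P(pr(R))` for `R = R_V(V₀)`, which is spanned by the `P(pr(b r))` with `r` among finitely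
many generators of `R`. If `r` is supported on `B₀Z x₁ ∪ … ∪ B₀Z xₖ`, then `pr(b r)` is `0` or `b r`
(killed by `P`) unless `b xᵢ⁻¹ ∈ B⁺` for some but not all `i`. Since `tⁿ xᵢ xⱼ⁻¹ ∈ B⁺` for all large
`n`, that forces `b = c tⁿ xᵢ` with `c ∈ B₀Z` and `n` bounded, and then `P(pr(b r)) = c P(pr(tⁿ xᵢ r))`
is one of finitely many vectors up to the action of `B₀Z`.

Only three properties of `B⁺` enter: it is `B₀Z`-bi-invariant, it lies in `B₀Z t^ℕ`, and it contains
`tⁿ g` for every `g ∈ B` and `n ≫ 0`; the last one is where the discreteness of `F` is used.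
-/

open Filter

lemma Subgroup.mul_mem_iff_of_forall_mul_mem {G : Type} [Group G] {S : Subgroup G} {M : Set G}
    (hSM : ∀ s ∈ S, ∀ h ∈ M, s * h ∈ M) : ∀ s ∈ S, ∀ h, s * h ∈ M ↔ h ∈ M :=
  fun s hs h => ⟨fun hsh => by simpa using hSM s⁻¹ (S.inv_mem hs) _ hsh, hSM s hs h⟩

lemma Subgroup.mul_mem_iff_of_forall_mem_mul {G : Type} [Group G] {S : Subgroup G} {M : Set G}
    (hMS : ∀ s ∈ S, ∀ h ∈ M, h * s ∈ M) : ∀ s ∈ S, ∀ h, h * s ∈ M ↔ h ∈ M :=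
  fun s hs h => ⟨fun hhs => by simpa using hMS s⁻¹ (S.inv_mem hs) _ hhs, hMS s hs h⟩

section GroupSpan

variable {o : Type} [CommRing o] {H : Type} {V : Type} [AddCommGroup V] [Module o V]

lemma gspan_mono_right [SMul H V] (S : Set H) {W W' : Set V} (h : W ⊆ W') :
    gspan o V S W ≤ gspan o V S W' :=
  Submodule.span_mono fun _ ⟨s, hs, w, hw, e⟩ => ⟨s, hs, w, h hw, e⟩

lemma gspan_le_of_subset [SMul H V] {S : Set H} {N : Submodule o V} (hN : IsStableSub o V S N)
    {X : Set V} (hX : X ⊆ N) : gspan o V S X ≤ N :=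
  Submodule.span_le.2 fun _ ⟨s, hs, w, hw, e⟩ => e ▸ hN s hs w (hX hw)

lemma isStableSub_gspan [Group H] [DistribMulAction H V] [SMulCommClass H o V] {S M : Set H}
    (hSM : ∀ s ∈ S, ∀ h ∈ M, s * h ∈ M) (W : Set V) :
    IsStableSub o V S (gspan o V M W) := by
  intro s hs v hv
  induction hv using Submodule.span_induction with
  | mem x hx =>
    obtain ⟨h, hh, w, hw, rfl⟩ := hx
    rw [← mul_smul]
    exact Submodule.subset_span ⟨s * h, hSM s hs h hh, w, hw, rfl⟩
  | zero => rw [smul_zero]; exact Submodule.zero_mem _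
  | add x y _ _ hx hy => rw [smul_add]; exact Submodule.add_mem _ hx hy
  | smul a x _ hx => rw [smul_comm]; exact Submodule.smul_mem _ a hx

end GroupSpan

section Restriction

variable {o : Type} [CommRing o] {H : Type} [Group H] {V : Type} [AddCommGroup V] [Module o V]
  [DistribMulAction H V] [SMulCommClass H o V] {S : Subgroup H} {V0 : Submodule o V} {M : Set H}

lemma mem_span_smul_unitElt (hst : IsStableSub o V (S : Set H) V0) (f : Ind o S V0) :
    f ∈ Submodule.span o (Set.range fun p : H × V0 => p.1 • unitElt o hst p.2.2) := by
  set T := Set.range fun p : H × V0 => p.1 • unitElt o hst p.2.2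
  obtain ⟨X, hX⟩ := f.2.2.2
  induction X using Finset.induction_on generalizing f with
  | empty =>
    have hf : f = 0 := Subtype.ext (funext fun h => by_contra fun hne => by simpa using hX h hne)
    rw [hf]
    exact Submodule.zero_mem _
  | insert x X _ ih =>
    set u : Ind o S V0 := x⁻¹ • unitElt o hst (f.2.1 x)
    have hu : ∀ h, (u : H → V) h = if h * x⁻¹ ∈ S then (f : H → V) h else 0 := by
      intro h
      by_cases hS : h * x⁻¹ ∈ S
      · simp [u, ind_smul_apply, unitElt, unitFn, hS, ← f.2.2.1 _ hS]
      · simp [u, ind_smul_apply, unitElt, unitFn, hS]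
    have hfu : f - u ∈ Submodule.span o T := by
      refine ih (f - u) fun h hne => ?_
      have hS : h * x⁻¹ ∉ S := fun hS => hne (by simp [hu, hS])
      obtain ⟨s, hs, y, hy, rfl⟩ := hX h (by simpa [hu, hS] using hne)
      rcases Finset.mem_insert.1 hy with rfl | hy
      · exact absurd (by simpa using hs) hS
      · exact ⟨s, hs, y, hy, rfl⟩
    have hu_mem : u ∈ Submodule.span o T :=
      Submodule.subset_span ⟨(x⁻¹, ⟨_, f.2.1 x⟩), rfl⟩
    simpa using Submodule.add_mem _ hfu hu_mem

lemma indicator_mem_Ind (hMS : ∀ s ∈ S, ∀ h, h * s ∈ M ↔ h ∈ M) {f : H → V}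
    (hf : f ∈ Ind o S V0) : M⁻¹.indicator f ∈ Ind o S V0 := by
  obtain ⟨hV0, hequiv, X, hX⟩ := hf
  refine ⟨fun h => ?_, fun s hs h => ?_, X, fun h hh => hX h fun h0 => hh (by simp [h0])⟩
  · by_cases hh : h ∈ M⁻¹
    · simpa [hh] using hV0 h
    · simp [hh]
  · have hsh : s * h ∈ M⁻¹ ↔ h ∈ M⁻¹ := by
      simpa [Set.mem_inv] using hMS s⁻¹ (S.inv_mem hs) h⁻¹
    by_cases hh : h ∈ M⁻¹
    · simp [hh, hsh.2 hh, hequiv s hs h]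
    · simp [hh, mt hsh.1 hh]

/-- Restriction to the cosets `S h` with `h⁻¹ ∈ M`: the functions supported on `S h` are the
translates `h⁻¹ • [1, v]`, which the presentation maps to `h⁻¹ • v ∈ <M V₀>`. -/
def indRestrict (hMS : ∀ s ∈ S, ∀ h, h * s ∈ M ↔ h ∈ M) : Ind o S V0 →ₗ[o] Ind o S V0 where
  toFun f := ⟨M⁻¹.indicator f, indicator_mem_Ind hMS f.2⟩
  map_add' _ _ := Subtype.ext (Set.indicator_add' _ _ _)
  map_smul' a f := Subtype.ext (Set.indicator_const_smul M⁻¹ a (f : H → V))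

variable (hMS : ∀ s ∈ S, ∀ h, h * s ∈ M ↔ h ∈ M)

lemma coe_indRestrict (f : Ind o S V0) : (indRestrict hMS f : H → V) = M⁻¹.indicator f := rfl

lemma indRestrict_compl (f : Ind o S V0) :
    indRestrict (M := Mᶜ) (fun s hs h => (hMS s hs h).not) f = f - indRestrict hMS f :=
  Subtype.ext (by rw [coe_indRestrict, Set.compl_inv, Set.indicator_compl]; rfl)

lemma indRestrict_eq_self {f : Ind o S V0} (hf : ∀ h, (f : H → V) h ≠ 0 → h⁻¹ ∈ M) :
    indRestrict hMS f = f :=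
  Subtype.ext (Set.indicator_eq_self.2 fun h hh => hf h hh)

lemma indRestrict_eq_zero {f : Ind o S V0} (hf : ∀ h, (f : H → V) h ≠ 0 → h⁻¹ ∉ M) :
    indRestrict hMS f = 0 :=
  Subtype.ext (Set.indicator_eq_zero'.2 (Set.disjoint_left.2 fun h hh => hf h hh))

lemma indRestrict_smul_unitElt (hst : IsStableSub o V (S : Set H) V0) (x : H) {v : V}
    (hv : v ∈ V0) :
    indRestrict hMS (x • unitElt o hst hv) = if x ∈ M then x • unitElt o hst hv else 0 := by
  have hsupp : ∀ h, ((x • unitElt o hst hv : Ind o S V0) : H → V) h ≠ 0 → (h⁻¹ ∈ M ↔ x ∈ M) := by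
    intro h hne
    have hS : h * x ∈ S := by
      by_contra hS
      exact hne (by simp [ind_smul_apply, unitElt, unitFn, hS])
    simpa using hMS _ (S.inv_mem hS) x
  split_ifs with hx
  · exact indRestrict_eq_self hMS fun h hne => (hsupp h hne).2 hx
  · exact indRestrict_eq_zero hMS fun h hne => mt (hsupp h hne).1 hx

lemma indRestrict_smul_of_mem (hSM : ∀ s ∈ S, ∀ h, s * h ∈ M ↔ h ∈ M) {c : H} (hc : c ∈ S)
    (f : Ind o S V0) : indRestrict hMS (c • f) = c • indRestrict hMS f := by
  refine Subtype.ext (funext fun h => ?_)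
  have hhc : c⁻¹ * h⁻¹ ∈ M ↔ h⁻¹ ∈ M := hSM c⁻¹ (S.inv_mem hc) h⁻¹
  by_cases hh : h⁻¹ ∈ M <;>
    simp [ind_smul_apply, coe_indRestrict, Set.indicator, hh, hhc]

end Restriction

namespace IsPresMap

variable {o : Type} [CommRing o] {H : Type} [Group H] {V : Type} [AddCommGroup V] [Module o V]
  [DistribMulAction H V] [SMulCommClass H o V] {S : Subgroup H} {V0 : Submodule o V} {M : Set H}
  {hst : IsStableSub o V (S : Set H) V0} {P : Ind o S V0 →ₗ[o] V}

lemma map_smul_unitElt (hP : IsPresMap o hst P) (x : H) {v : V} (hv : v ∈ V0) :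
    P (x • unitElt o hst hv) = x • v := by
  rw [hP.1, hP.2]

lemma map_indRestrict_mem_gspan (hP : IsPresMap o hst P) (hMS : ∀ s ∈ S, ∀ h, h * s ∈ M ↔ h ∈ M)
    (f : Ind o S V0) : P (indRestrict hMS f) ∈ gspan o V M V0 := by
  suffices Submodule.span o (Set.range fun p : H × V0 => p.1 • unitElt o hst p.2.2) ≤
      (gspan o V M V0).comap (P ∘ₗ indRestrict hMS) from this (mem_span_smul_unitElt hst f)
  rw [Submodule.span_le]
  rintro _ ⟨⟨x, v, hv⟩, rfl⟩
  simp only [SetLike.mem_coe, Submodule.mem_comap, LinearMap.comp_apply,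
    indRestrict_smul_unitElt]
  split_ifs with hx
  · rw [hP.map_smul_unitElt]
    exact Submodule.subset_span ⟨x, hx, v, hv, rfl⟩
  · rw [map_zero]
    exact Submodule.zero_mem _

lemma exists_indRestrict_eq_self (hP : IsPresMap o hst P)
    (hMS : ∀ s ∈ S, ∀ h, h * s ∈ M ↔ h ∈ M) {v : V} (hv : v ∈ gspan o V M V0) :
    ∃ f, indRestrict hMS f = f ∧ P f = v := by
  suffices gspan o V M V0 ≤ (LinearMap.eqLocus (indRestrict hMS) LinearMap.id).map P from
    this hv
  refine Submodule.span_le.2 ?_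
  rintro _ ⟨x, hx, w, hw, rfl⟩
  exact ⟨x • unitElt o hst hw, by simp [indRestrict_smul_unitElt, hx], hP.map_smul_unitElt x hw⟩

lemma inf_gspan_eq_map_ker (hP : IsPresMap o hst P) (hMS : ∀ s ∈ S, ∀ h, h * s ∈ M ↔ h ∈ M) :
    gspan o V M V0 ⊓ gspan o V Mᶜ V0 = (LinearMap.ker P).map (P ∘ₗ indRestrict hMS) := by
  have hMSc : ∀ s ∈ S, ∀ h, h * s ∈ Mᶜ ↔ h ∈ Mᶜ := fun s hs h => (hMS s hs h).not
  apply le_antisymm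
  · rintro v ⟨hvM, hvMc⟩
    obtain ⟨fM, hfM, rfl⟩ := hP.exists_indRestrict_eq_self hMS hvM
    obtain ⟨fMc, hfMc, hPfMc⟩ := hP.exists_indRestrict_eq_self hMSc hvMc
    rw [indRestrict_compl hMS, sub_eq_self] at hfMc
    refine ⟨fM - fMc, by simp [hPfMc], ?_⟩
    simp [hfM, hfMc]
  · rintro _ ⟨r, hr, rfl⟩
    refine ⟨hP.map_indRestrict_mem_gspan hMS r, ?_⟩
    have hc := hP.map_indRestrict_mem_gspan hMSc r
    rw [indRestrict_compl hMS, map_sub, LinearMap.mem_ker.1 hr, zero_sub, neg_mem_iff] at hc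
    exact hc

/-- The coset `S x b⁻¹` in the support of `b • r` is kept by the restriction iff `b x⁻¹ ∈ M`. If all
of them are kept, `P` kills `b • r`; if `b x⁻¹ = c tⁿ` is kept but not all are, then `n < N`. -/
lemma map_indRestrict_smul_mem (hP : IsPresMap o hst P) (hSM : ∀ s ∈ S, ∀ h, s * h ∈ M ↔ h ∈ M)
    (hMS : ∀ s ∈ S, ∀ h, h * s ∈ M ↔ h ∈ M) {t : H} (hMt : ∀ h ∈ M, ∃ c ∈ S, ∃ n : ℕ, h = c * t ^ n)
    {r : Ind o S V0} (hr : P r = 0)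
    {X : Finset H} (hX : ∀ h, (r : H → V) h ≠ 0 → ∃ s ∈ S, ∃ x ∈ X, h = s * x) {N : ℕ}
    (hN : ∀ n ≥ N, ∀ p ∈ X ×ˢ X, t ^ n * (p.1 * p.2⁻¹) ∈ M) (b : H) :
    P (indRestrict hMS (b • r)) ∈ gspan o V (S : Set H)
      ((Finset.range N ×ˢ X).image fun p => P (indRestrict hMS ((t ^ p.1 * p.2) • r))) := by
  have hsupp : ∀ h, ((b • r : Ind o S V0) : H → V) h ≠ 0 →
      ∃ x ∈ X, (h⁻¹ ∈ M ↔ b * x⁻¹ ∈ M) := by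
    intro h hne
    obtain ⟨s, hs, x, hx, hhb⟩ := hX (h * b) hne
    refine ⟨x, hx, ?_⟩
    rw [show h⁻¹ = b * x⁻¹ * s⁻¹ by rw [eq_mul_inv_iff_mul_eq.2 hhb]; group]
    exact hMS s⁻¹ (S.inv_mem hs) _
  by_cases hpos : ∃ x ∈ X, b * x⁻¹ ∈ M
  · obtain ⟨x, hx, hbx⟩ := hpos
    obtain ⟨c, hc, n, hcn⟩ := hMt _ hbx
    by_cases hn : n < N
    · have hb : b • r = c • ((t ^ n * x) • r) := by
        rw [smul_smul, ← mul_assoc, ← hcn, inv_mul_cancel_right]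
      rw [hb, indRestrict_smul_of_mem hMS hSM hc, hP.1]
      refine Submodule.subset_span ⟨c, hc, _, ?_, rfl⟩
      exact Finset.mem_image.2 ⟨(n, x), Finset.mem_product.2 ⟨Finset.mem_range.2 hn, hx⟩, rfl⟩
    · have hall : ∀ x' ∈ X, b * x'⁻¹ ∈ M := by
        intro x' hx'
        rw [show b * x'⁻¹ = c * (t ^ n * (x * x'⁻¹)) by rw [← mul_assoc, ← hcn]; group]
        exact (hSM c hc _).2 (hN n (not_lt.1 hn) (x, x') (Finset.mem_product.2 ⟨hx, hx'⟩))
      rw [indRestrict_eq_self hMS fun h hne => ?_, hP.1, hr, smul_zero]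
      · exact Submodule.zero_mem _
      · obtain ⟨x', hx', hiff⟩ := hsupp h hne
        exact hiff.2 (hall x' hx')
  · push Not at hpos
    rw [indRestrict_eq_zero hMS fun h hne => ?_, map_zero]
    · exact Submodule.zero_mem _
    · obtain ⟨x', hx', hiff⟩ := hsupp h hne
      exact mt hiff.1 (hpos x' hx')

lemma exists_finset_map_indRestrict_smul_mem (hP : IsPresMap o hst P) (hSM : ∀ s ∈ S, ∀ h, s * h ∈ M ↔ h ∈ M)
    (hMS : ∀ s ∈ S, ∀ h, h * s ∈ M ↔ h ∈ M) {t : H} (hMt : ∀ h ∈ M, ∃ c ∈ S, ∃ n : ℕ, h = c * t ^ n)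
    (hev : ∀ g, ∀ᶠ n in atTop, t ^ n * g ∈ M) {r : Ind o S V0} (hr : P r = 0) :
    ∃ Y : Finset V, (∀ y ∈ Y, ∃ b : H, y = P (indRestrict hMS (b • r))) ∧
      ∀ b : H, P (indRestrict hMS (b • r)) ∈ gspan o V (S : Set H) Y := by
  obtain ⟨X, hX⟩ := r.2.2.2
  obtain ⟨N, hN⟩ := ((eventually_all_finset (X ×ˢ X)).2 fun p _ =>
    hev (p.1 * p.2⁻¹)).exists_forall_of_atTop
  refine ⟨_, fun y hy => ?_, hP.map_indRestrict_smul_mem hSM hMS hMt hr hX hN⟩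
  obtain ⟨p, -, rfl⟩ := Finset.mem_image.1 hy
  exact ⟨_, rfl⟩

theorem isFGOver_inf_gspan (hP : IsPresMap o hst P) (hSM : ∀ s ∈ S, ∀ h, s * h ∈ M ↔ h ∈ M)
    (hMS : ∀ s ∈ S, ∀ h, h * s ∈ M ↔ h ∈ M) {t : H} (hMt : ∀ h ∈ M, ∃ c ∈ S, ∃ n : ℕ, h = c * t ^ n)
    (hev : ∀ g, ∀ᶠ n in atTop, t ^ n * g ∈ M)
    (hker : IsFGOver o (Ind o S V0) (Set.univ : Set H) (LinearMap.ker P)) :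
    IsFGOver o V (S : Set H) (gspan o V M V0 ⊓ gspan o V Mᶜ V0) := by
  obtain ⟨R, hRker, hR⟩ := hker
  choose Y hYR hY using fun r : R =>
    hP.exists_finset_map_indRestrict_smul_mem hSM hMS hMt hev (LinearMap.mem_ker.1 (hRker r.2))
  have hΔ := hP.inf_gspan_eq_map_ker hMS
  have hYΔ : (R.attach.biUnion Y : Set V) ⊆
      ((gspan o V M V0 ⊓ gspan o V Mᶜ V0 : Submodule o V) : Set V) := by
    intro y hy
    obtain ⟨r, -, hyr⟩ := Finset.mem_biUnion.1 hy
    obtain ⟨b, rfl⟩ := hYR r y hyr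
    rw [SetLike.mem_coe, hΔ]
    refine ⟨b • (r : Ind o S V0), ?_, rfl⟩
    rw [SetLike.mem_coe, LinearMap.mem_ker, hP.1, LinearMap.mem_ker.1 (hRker r.2), smul_zero]
  have hΔstable : IsStableSub o V (S : Set H) (gspan o V M V0 ⊓ gspan o V Mᶜ V0) :=
    fun s hs v hv => ⟨isStableSub_gspan (fun s hs h => (hSM s hs h).2) _ s hs v hv.1,
      isStableSub_gspan (fun s hs h => mt (hSM s hs h).1) _ s hs v hv.2⟩
  refine ⟨_, hYΔ, le_antisymm ?_ (gspan_le_of_subset hΔstable hYΔ)⟩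
  rw [hΔ, hR, gspan, Submodule.map_span, Submodule.span_le]
  rintro _ ⟨_, ⟨b, -, r, hr, rfl⟩, rfl⟩
  exact gspan_mono_right _ (Finset.subset_biUnion_of_mem Y (Finset.mem_attach R ⟨r, hr⟩))
    (hY ⟨r, hr⟩ b)

end IsPresMap

section LocalField

variable {F : Type} [Field F] [TopologicalSpace F] [IsTopologicalRing F] (L : NALF F)

lemma NALF.exists_pow_mul_mem (x : F) : ∃ n : ℕ, L.ϖ ^ n * x ∈ L.O := by
  have hO : (L.O : Set F) ∈ nhds (0 : F) :=
    (L.nhds_zero _).2 ⟨0, by rintro _ ⟨y, hy, rfl⟩; simpa using hy⟩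
  have hmul : Tendsto (· * x) (nhds 0) (nhds 0) := by
    simpa using (continuous_mul_const x).tendsto 0
  obtain ⟨n, hn⟩ := (L.nhds_zero _).1 (hmul hO)
  exact ⟨n, hn ⟨1, L.O.one_mem, (mul_one _).symm⟩⟩

lemma NALF.eventually_pow_mul_mem (x : F) : ∀ᶠ n in atTop, L.ϖ ^ n * x ∈ L.O := by
  obtain ⟨k, hk⟩ := L.exists_pow_mul_mem x
  filter_upwards [eventually_ge_atTop k] with n hn
  rw [← Nat.sub_add_cancel hn, pow_add, mul_assoc]
  exact L.O.mul_mem (L.O.pow_mem L.ϖ_mem _) hk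

lemma NALF.exists_eq_pow_mul_unit {y : F} (hy : y ∈ L.O) (hy0 : y ≠ 0) :
    ∃ (m : ℕ) (u : F), u ∈ L.O ∧ u⁻¹ ∈ L.O ∧ y = L.ϖ ^ m * u := by
  obtain ⟨k, hk⟩ := L.exists_pow_mul_mem y⁻¹
  -- divide `y` by `ϖ` until it is a unit; `ϖᵏ y⁻¹ ∈ O` bounds the number of steps
  induction k generalizing y with
  | zero => exact ⟨0, y, hy, by simpa using hk, by simp⟩
  | succ k ih =>
    by_cases hyu : y⁻¹ ∈ L.O
    · exact ⟨0, y, hy, hyu, by simp⟩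
    have hk' : L.ϖ ^ k * (y / L.ϖ)⁻¹ ∈ L.O := by
      convert hk using 1
      field_simp [L.ϖ_ne_zero]
      ring
    obtain ⟨m, u, hu, hu', he⟩ :=
      ih (L.ϖ_gen y hy hyu) (div_ne_zero hy0 L.ϖ_ne_zero) hk'
    refine ⟨m + 1, u, hu, hu', ?_⟩
    rw [div_eq_iff L.ϖ_ne_zero] at he
    rw [he]
    ring

end LocalField

section Triangular

variable {F : Type} [Field F]

lemma diag_ne_zero_of_mem_Bgr {g : GL (Fin 2) F} (hg : g ∈ Bgr F) : g 0 0 ≠ 0 ∧ g 1 1 ≠ 0 := by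
  have hdet := Matrix.GeneralLinearGroup.det_ne_zero g
  rw [Matrix.det_fin_two, show g 1 0 = 0 from hg, mul_zero, sub_zero] at hdet
  exact ⟨left_ne_zero_of_mul hdet, right_ne_zero_of_mul hdet⟩

lemma val_inv_of_mem_Bgr {g : GL (Fin 2) F} (hg : g ∈ Bgr F) :
    ((g⁻¹ : GL (Fin 2) F) : Matrix (Fin 2) (Fin 2) F) =
      !![(g 0 0)⁻¹, -(g 0 1 * (g 0 0)⁻¹ * (g 1 1)⁻¹); 0, (g 1 1)⁻¹] := by
  obtain ⟨ha, hd⟩ := diag_ne_zero_of_mem_Bgr hg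
  refine Units.inv_eq_of_mul_eq_one_right ?_
  ext i j
  fin_cases i <;> fin_cases j <;>
    simp [Matrix.mul_apply, show g 1 0 = 0 from hg, ha, hd]
  field_simp
  ring

end Triangular

section GL2

variable {F : Type} [Field F] [TopologicalSpace F] [IsTopologicalRing F] (L : NALF F)

lemma tGL_pow_val (n : ℕ) : ((tGL F L ^ n : GL (Fin 2) F) : Matrix (Fin 2) (Fin 2) F) =
    !![L.ϖ ^ n, 0; 0, 1] := by
  induction n with
  | zero => simp [Matrix.one_fin_two]
  | succ k ih => simp [pow_succ, ih, tGL_val]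

lemma tGL_pow_inv_val (n : ℕ) :
    (((tGL F L ^ n)⁻¹ : GL (Fin 2) F) : Matrix (Fin 2) (Fin 2) F) = !![(L.ϖ ^ n)⁻¹, 0; 0, 1] := by
  refine Units.inv_eq_of_mul_eq_one_right ?_
  rw [tGL_pow_val]
  simp [pow_ne_zero n L.ϖ_ne_zero, Matrix.one_fin_two]

lemma mem_B0gr_iff {g : GL (Fin 2) F} : g ∈ B0gr F L ↔ g 1 0 = 0 ∧
    g 0 0 ∈ L.O ∧ (g 0 0)⁻¹ ∈ L.O ∧ g 0 1 ∈ L.O ∧ g 1 1 ∈ L.O ∧ (g 1 1)⁻¹ ∈ L.O := by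
  constructor
  · rintro ⟨hB, hK, hK'⟩
    have hinv := val_inv_of_mem_Bgr hB
    refine ⟨hB, hK 0 0, ?_, hK 0 1, hK 1 1, ?_⟩
    · simpa [hinv] using hK' 0 0
    · simpa [hinv] using hK' 1 1
  · rintro ⟨hB, ha, ha', hb, hd, hd'⟩
    refine ⟨hB, fun i j => ?_, fun i j => ?_⟩
    · fin_cases i <;> fin_cases j
      exacts [ha, hb, (show g 1 0 = 0 from hB) ▸ L.O.zero_mem, hd]
    · rw [val_inv_of_mem_Bgr hB]
      fin_cases i <;> fin_cases j
      exacts [ha', L.O.neg_mem (L.O.mul_mem (L.O.mul_mem hb ha') hd'), L.O.zero_mem, hd']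

lemma val_tGL_pow_conj {g : GL (Fin 2) F} (hg : g ∈ Bgr F) (n : ℕ) :
    ((tGL F L ^ n * g * (tGL F L ^ n)⁻¹ : GL (Fin 2) F) : Matrix (Fin 2) (Fin 2) F) =
      !![g 0 0, L.ϖ ^ n * g 0 1; 0, g 1 1] := by
  rw [Units.val_mul, Units.val_mul, tGL_pow_val, tGL_pow_inv_val,
    Matrix.eta_fin_two (g : Matrix (Fin 2) (Fin 2) F)]
  simp [show g 1 0 = 0 from hg]
  field_simp [pow_ne_zero n L.ϖ_ne_zero]

lemma tGL_pow_conj_mem_B0gr {b : GL (Fin 2) F} (hb : b ∈ B0gr F L) (n : ℕ) :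
    tGL F L ^ n * b * (tGL F L ^ n)⁻¹ ∈ B0gr F L := by
  obtain ⟨hB, ha, ha', hc, hd, hd'⟩ := (mem_B0gr_iff L).1 hb
  rw [mem_B0gr_iff, val_tGL_pow_conj L hB n]
  exact ⟨rfl, ha, ha', L.O.mul_mem (L.O.pow_mem L.ϖ_mem n) hc, hd, hd'⟩

lemma tGL_pow_conj_mem_B0Zgr {c : GL (Fin 2) F} (hc : c ∈ B0Zgr F L) (n : ℕ) :
    tGL F L ^ n * c * (tGL F L ^ n)⁻¹ ∈ B0Zgr F L := by
  obtain ⟨b, hb, z, hz, rfl⟩ := hc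
  refine ⟨_, tGL_pow_conj_mem_B0gr L hb n, z, hz, ?_⟩
  rw [mul_assoc _ b, mul_assoc, mul_assoc, ← (Subgroup.mem_center_iff.1 hz _)]
  group

lemma mul_mem_BplusGL {c g : GL (Fin 2) F} (hc : c ∈ B0Zgr F L) (hg : g ∈ BplusGL F L) :
    c * g ∈ BplusGL F L := by
  obtain ⟨b, hb, n, rfl⟩ := hg
  exact ⟨c * b, (B0Zgr F L).mul_mem hc hb, n, (mul_assoc _ _ _).symm⟩

lemma BplusGL_mul_mem {g c : GL (Fin 2) F} (hg : g ∈ BplusGL F L) (hc : c ∈ B0Zgr F L) :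
    g * c ∈ BplusGL F L := by
  obtain ⟨b, hb, n, rfl⟩ := hg
  refine ⟨b * (tGL F L ^ n * c * (tGL F L ^ n)⁻¹),
    (B0Zgr F L).mul_mem hb (tGL_pow_conj_mem_B0Zgr L hc n), n, ?_⟩
  group

/-- For `g = (a c; 0 d)` and `n` large, `tⁿ g = (u w; 0 1) · d · tᵐ` with `u` a unit and `w`
integral: write `ϖⁿ a / d = ϖᵐ u` and `w = ϖⁿ c / d`. -/
lemma eventually_tGL_pow_mul_mem_BplusGL {g : GL (Fin 2) F} (hg : g ∈ Bgr F) :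
    ∀ᶠ n in atTop, tGL F L ^ n * g ∈ BplusGL F L := by
  obtain ⟨ha, hd⟩ := diag_ne_zero_of_mem_Bgr hg
  filter_upwards [L.eventually_pow_mul_mem (g 0 0 / g 1 1),
    L.eventually_pow_mul_mem (g 0 1 / g 1 1)] with n han hcn
  obtain ⟨m, u, hu, hu', he⟩ := L.exists_eq_pow_mul_unit han
    (mul_ne_zero (pow_ne_zero n L.ϖ_ne_zero) (div_ne_zero ha hd))
  have hu0 : u ≠ 0 := by rintro rfl; simp [L.ϖ_ne_zero, ha, hd] at he
  let b : GL (Fin 2) F := Matrix.GeneralLinearGroup.mkOfDetNeZero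
    !![u, L.ϖ ^ n * (g 0 1 / g 1 1); 0, 1] (by simpa [Matrix.det_fin_two_of] using hu0)
  have hb : b ∈ B0gr F L := (mem_B0gr_iff L).2 (by simp [b, hu, hu', hcn, L.O.one_mem])
  refine ⟨b * Matrix.GeneralLinearGroup.scalar (Fin 2) (Units.mk0 _ hd),
    ⟨b, hb, _, by rw [Matrix.GeneralLinearGroup.center_eq_range_scalar]; exact ⟨_, rfl⟩, rfl⟩, m, ?_⟩
  ext i j
  rw [Units.val_mul, Units.val_mul, Units.val_mul, tGL_pow_val, tGL_pow_val]
  fin_cases i <;> fin_cases j <;> simp [b, Matrix.mul_apply, show g 1 0 = 0 from hg]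
  · rw [mul_div_assoc', div_eq_iff hd] at he
    linear_combination he
  · field_simp

end GL2

section Borel

variable {F : Type} [Field F] [TopologicalSpace F] [IsTopologicalRing F] (L : NALF F)

lemma B0Zb_mul_mem_BplusB_iff : ∀ s ∈ B0Zb F L, ∀ h, s * h ∈ BplusB F L ↔ h ∈ BplusB F L :=
  Subgroup.mul_mem_iff_of_forall_mul_mem fun _ hs _ hh => mul_mem_BplusGL L hs hh

lemma BplusB_mul_B0Zb_mem_iff : ∀ s ∈ B0Zb F L, ∀ h, h * s ∈ BplusB F L ↔ h ∈ BplusB F L :=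
  Subgroup.mul_mem_iff_of_forall_mem_mul fun _ hs _ hh => BplusGL_mul_mem L hh hs

lemma exists_eq_B0Zb_mul_tB_pow {h : Bgr F} (hh : h ∈ BplusB F L) :
    ∃ c ∈ B0Zb F L, ∃ n : ℕ, h = c * tB F L ^ n := by
  obtain ⟨c, hc, n, hcn⟩ := hh
  refine ⟨h * (tB F L ^ n)⁻¹, ?_, n, by group⟩
  show ((h * (tB F L ^ n)⁻¹ : Bgr F) : GL (Fin 2) F) ∈ B0Zgr F L
  simpa [hcn, tB] using hc

lemma eventually_tB_pow_mul_mem_BplusB (g : Bgr F) :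
    ∀ᶠ n in atTop, tB F L ^ n * g ∈ BplusB F L :=
  eventually_tGL_pow_mul_mem_BplusGL L g.2

end Borel

theorem statement3_general
    (o : Type) [CommRing o]
    (F : Type) [Field F] [TopologicalSpace F] [IsTopologicalRing F] (LF : NALF F)
    (V : Type) [AddCommGroup V] [Module o V]
    [DistribMulAction (↥(Bgr F)) V] [SMulCommClass (↥(Bgr F)) o V]
    (V0 : Submodule o V)
    (hst : IsStableSub o V ((B0Zb F LF : Subgroup ↥(Bgr F)) : Set ↥(Bgr F)) V0)
    (P : Ind o (B0Zb F LF) V0 →ₗ[o] V) (hP : IsPresMap o hst P)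
    (hker : IsFGOver o (↥(Ind o (B0Zb F LF) V0)) (Set.univ : Set ↥(Bgr F)) (LinearMap.ker P)) :
    IsFGOver o V ((B0Zb F LF : Subgroup ↥(Bgr F)) : Set ↥(Bgr F))
      (gspan o V (BplusB F LF) (V0 : Set V) ⊓ gspan o V ((BplusB F LF)ᶜ) (V0 : Set V)) :=
  hP.isFGOver_inf_gspan (B0Zb_mul_mem_BplusB_iff LF) (BplusB_mul_B0Zb_mem_iff LF)
    (fun _ => exists_eq_B0Zb_mul_tB_pow LF) (eventually_tB_pow_mul_mem_BplusB LF) hker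

/-- If the kernel of the presentation `ind_{B₀Z}^B (V₀) → V` is finitely
generated over `o[B]`, then `Δ_V(V₀) = <B⁺V₀> ∩ <(B-B⁺)V₀>` is finitely generated over
`o[B₀Z]`. -/
theorem statement3
    (o : Type) [CommRing o] [IsNoetherianRing o]
    (F : Type) [Field F] [TopologicalSpace F] [IsTopologicalRing F] (LF : NALF F)
    (V : Type) [AddCommGroup V] [Module o V]
    [DistribMulAction (↥(Bgr F)) V] [SMulCommClass (↥(Bgr F)) o V]
    (hsm : IsSmoothRep o (↥(Bgr F)) V)
    (V0 : Submodule o V)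
    (hst : IsStableSub o V ((B0Zb F LF : Subgroup ↥(Bgr F)) : Set ↥(Bgr F)) V0)
    (hgen : gspan o V (Set.univ : Set ↥(Bgr F)) (V0 : Set V) = ⊤)
    (P : Ind o (B0Zb F LF) V0 →ₗ[o] V) (hP : IsPresMap o hst P)
    (hker : IsFGOver o (↥(Ind o (B0Zb F LF) V0)) (Set.univ : Set ↥(Bgr F)) (LinearMap.ker P)) :
    IsFGOver o V ((B0Zb F LF : Subgroup ↥(Bgr F)) : Set ↥(Bgr F))
      (gspan o V (BplusB F LF) (V0 : Set V) ⊓ gspan o V ((BplusB F LF)ᶜ) (V0 : Set V)) :=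
  statement3_general o F LF V V0 hst P hP hker
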